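/- For all k ≥ 3, in the ring R: (1 − c q^k) G_{k_d} = (1 − c q^{2k}) (1 − q^k)^{−1} G_{(k−1)_d} + (a q^k + d q^k + a d q^{2k}) (1 − q^{k−1})^{−1} G_{(k−2)_d} + a d q^{2k−1} (1 − q^{k−2})^{−1} G_{(k−3)_d}, where each 1 − q^j (j ≥ 1) is invertible in R since it has constant term 1. -/

import Mathlib

open Finset PowerSeries

namespace Primc

/-- Colours: `0 = a`, `1 = b`, `2 = c`, `3 = d`. -/
abbrev Colour := Fin 4

/-- A coloured part `k_z`: an underlying integer `k` together with its colour `z`. -/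
abbrev CPart := ℕ × Colour

/-- The matrix `D` of minimal differences, with rows and columns indexed by the colours
`a, b, c, d` in this order. -/
def Dmat : Colour → Colour → ℕ := ![![2,1,2,2], ![1,0,1,1], ![0,1,0,2], ![0,1,0,2]]

/-- The position of a coloured part in the total order
`1_a < 1_b < 1_c < 1_d < 2_a < 2_b < 2_c < 2_d < ⋯`. -/
def pos (p : CPart) : ℕ := 4 * p.1 + (p.2 : ℕ)

/-- A Primc partition: a finite sequence of coloured positive integers, non-increasing in the
above total order, in which consecutive parts `λ_i, λ_{i+1}` of colours `x, y` satisfy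
`λ_i − λ_{i+1} ≥ D(x,y)`. -/
def IsPrimc (l : List CPart) : Prop :=
  (∀ p ∈ l, 1 ≤ p.1) ∧
  l.Chain' fun p r => pos r ≤ pos p ∧ r.1 + Dmat p.2 r.2 ≤ p.1

/-- The weight of a coloured partition: the sum of the underlying integers of its parts. -/
def wt (l : List CPart) : ℕ := (l.map Prod.fst).sum

/-- The number of parts of colour `z`. -/
def nc (l : List CPart) (z : Colour) : ℕ := l.countP fun p => p.2 == z

/-- `R₀ = ℤ[a,c,d]`, with `a = X 0`, `c = X 1`, `d = X 2`. -/
abbrev R0 := MvPolynomial (Fin 3) ℤ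

/-- `R = ℤ[a,c,d][[q]]`. -/
abbrev R := PowerSeries R0

/-- The variable `q`. -/
noncomputable def qq : R := PowerSeries.X

/-- The variable `a`. -/
noncomputable def av : R0 := MvPolynomial.X 0

/-- The variable `c`. -/
noncomputable def cv : R0 := MvPolynomial.X 1

/-- The variable `d`. -/
noncomputable def dv : R0 := MvPolynomial.X 2

/-- The monomial `a^{#(a-parts)} c^{#(c-parts)} d^{#(d-parts)}` attached to a coloured
partition. -/
noncomputable def mono (l : List CPart) : R0 := av ^ nc l 0 * cv ^ nc l 2 * dv ^ nc l 3

/-- The infinite product `∏_{j ≥ 0} f j`, defined coefficientwise: the coefficient of `qⁿ` is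
the corresponding coefficient of the partial product `∏_{j ≤ n} f j`.  This agrees with the
usual (coefficientwise convergent) infinite product whenever the factor `f j` is `≡ 1`
modulo `q^{j+1}`, as is the case for all products appearing here. -/
noncomputable def iprod (f : ℕ → R) : R :=
  PowerSeries.mk fun n => PowerSeries.coeff n (∏ j ∈ Finset.range (n + 1), f j)

/-- The largest part of a Primc partition (its parts being written in non-increasing order),
with the convention that the empty partition has largest part `0_b`. -/
def top (l : List CPart) : CPart := l.headD (0, 1)

/-- `G_{k_x} ∈ R`: the sum of `q^{|λ|} a^{#(a-parts)} c^{#(c-parts)} d^{#(d-parts)}` over all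
Primc partitions `λ` whose largest part is at most `k_x` in the colour order. -/
noncomputable def G (k : ℕ) (x : Colour) : R :=
  PowerSeries.mk fun n =>
    ∑ᶠ lam : {l : List CPart // IsPrimc l ∧ wt l = n ∧ pos (top l) ≤ pos (k, x)}, mono lam.1

/-- `E_{k_x} ∈ R`: the sum of `q^{|λ|} a^{#(a-parts)} c^{#(c-parts)} d^{#(d-parts)}` over all
Primc partitions `λ` whose largest part is exactly `k_x` (so `E_{0_b} = 1`, the empty
partition having largest part `0_b` by convention). -/
noncomputable def E (k : ℕ) (x : Colour) : R :=
  PowerSeries.mk fun n =>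
    ∑ᶠ lam : {l : List CPart // IsPrimc l ∧ wt l = n ∧ top l = (k, x)}, mono lam.1

/-!
Removing the largest part `k_x` of a Primc partition leaves a Primc partition whose largest
part lies in `followers k x`, so `E_{k_x} = colourWeight x · q^k · genFun (followers k x)`.
Each of these sets is an initial segment of the colour order plus one or two isolated parts,
which yields `(1 - q^k) E_{k_b} = q^k G_{(k-1)_d}` and
`(1 - q^{k-1}) E_{k_a} = a q^k G_{(k-2)_d}`. Since `c` and `d` have the same row in `D`, one
generating function serves both `E_{k_c}` and `E_{k_d}`; eliminating it gives
`(1 - c q^k) G_{k_d} = G_{(k-1)_d} + (1 + d q^k) E_{k_a} + (1 - c q^k) E_{k_b}`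
`  + d q^k G_{(k-1)_b}`,
and substituting the formulas for `E_{k_a}`, `E_{k_b}` and `G_{(k-1)_b}` gives the recurrence.
-/

theorem _root_.List.finite_setOf_forall_mem_length_le {α : Type*} {s : Set α} (hs : s.Finite)
    (n : ℕ) : {l : List α | (∀ x ∈ l, x ∈ s) ∧ l.length ≤ n}.Finite := by
  have := hs.to_subtype
  refine ((List.finite_length_le s n).image (List.map (↑))).subset ?_
  rintro l ⟨hl, hlen⟩
  exact ⟨l.attach.map fun x => ⟨x.1, hl x.1 x.2⟩, by simpa using hlen, by simp⟩

theorem le_wt_of_mem {l : List CPart} {p : CPart} (hp : p ∈ l) : p.1 ≤ wt l :=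
  List.le_sum_of_mem (List.mem_map_of_mem hp)

theorem finite_setOf_isPrimc_wt_eq (n : ℕ) : {l | IsPrimc l ∧ wt l = n}.Finite := by
  refine ((List.finite_setOf_forall_mem_length_le
    ((Set.finite_Iic n).prod Set.finite_univ) n)).subset ?_
  rintro l ⟨⟨hpos, -⟩, rfl⟩
  refine ⟨fun p hp => ⟨le_wt_of_mem hp, trivial⟩, ?_⟩
  simpa [wt] using List.length_le_sum_of_one_le (l.map Prod.fst) (by simpa using hpos)

noncomputable def genFun (T : Set CPart) : R :=
  PowerSeries.mk fun n => ∑ᶠ l ∈ {l | IsPrimc l ∧ wt l = n ∧ top l ∈ T}, mono l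

theorem genFun_union {S T : Set CPart} (h : Disjoint S T) :
    genFun (S ∪ T) = genFun S + genFun T := by
  refine PowerSeries.ext fun n => ?_
  have hfin (U : Set CPart) : {l | IsPrimc l ∧ wt l = n ∧ top l ∈ U}.Finite :=
    (finite_setOf_isPrimc_wt_eq n).subset fun l hl => ⟨hl.1, hl.2.1⟩
  have hsplit : {l | IsPrimc l ∧ wt l = n ∧ top l ∈ S ∪ T} =
      {l | IsPrimc l ∧ wt l = n ∧ top l ∈ S} ∪
        {l | IsPrimc l ∧ wt l = n ∧ top l ∈ T} := by
    ext l; simp only [Set.mem_ofPred_eq, Set.mem_union]; tauto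
  simp only [genFun, coeff_mk, map_add, hsplit]
  refine finsum_mem_union ?_ (hfin S) (hfin T)
  exact Set.disjoint_left.2 fun l hS hT => h.ne_of_mem hS.2.2 hT.2.2 rfl

theorem G_eq_genFun (k : ℕ) (x : Colour) : G k x = genFun {t | pos t ≤ pos (k, x)} := by
  refine PowerSeries.ext fun n => ?_
  simp only [G, genFun, coeff_mk, Set.mem_ofPred_eq]
  exact finsum_subtype_eq_finsum_cond _

theorem E_eq_genFun (k : ℕ) (x : Colour) : E k x = genFun {(k, x)} := by
  refine PowerSeries.ext fun n => ?_
  simp only [E, genFun, coeff_mk, Set.mem_ofPred_eq]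
  exact finsum_subtype_eq_finsum_cond _

theorem pos_injective : Function.Injective pos := by
  rintro ⟨m, z⟩ ⟨n, w⟩ h
  simp only [pos] at h
  have : m = n ∧ (z : ℕ) = w := by omega
  simp [this.1, Fin.ext this.2]

theorem G_eq_G_add_E {k k' : ℕ} {x x' : Colour} (h : pos (k', x') + 1 = pos (k, x)) :
    G k x = G k' x' + E k x := by
  rw [G_eq_genFun, G_eq_genFun, E_eq_genFun, ← genFun_union]
  · congr 1
    ext t
    simp only [Set.mem_ofPred_eq, Set.mem_union, Set.mem_singleton_iff]
    refine ⟨fun ht => ?_, ?_⟩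
    · rcases ht.lt_or_eq with ht | ht
      · exact .inl (by omega)
      · exact .inr (pos_injective ht)
    · rintro (ht | rfl) <;> omega
  · simp only [Set.disjoint_singleton_right, Set.mem_ofPred_eq]
    omega

def followers (k : ℕ) (x : Colour) : Set CPart :=
  {t | pos t ≤ pos (k, x) ∧ t.1 + Dmat x t.2 ≤ k}

theorem isPrimc_iff (l : List CPart) :
    IsPrimc l ↔
      (∀ p ∈ l, 1 ≤ p.1) ∧
        l.IsChain fun p r => pos r ≤ pos p ∧ r.1 + Dmat p.2 r.2 ≤ p.1 :=
  Iff.rfl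

theorem isPrimc_cons_iff {k : ℕ} {x : Colour} {l : List CPart} (hk : 1 ≤ k) :
    IsPrimc ((k, x) :: l) ↔ IsPrimc l ∧ top l ∈ followers k x := by
  cases l with
  | nil =>
    have hD : Dmat x 1 ≤ 1 := by fin_cases x <;> decide
    simp [isPrimc_iff, followers, top, pos, hk]
    omega
  | cons p l =>
    simp only [isPrimc_iff, followers, top, List.headD, List.mem_cons, List.isChain_cons_cons,
      forall_eq_or_imp, Set.mem_ofPred_eq]
    tauto

noncomputable def colourWeight : Colour → R0 := ![av, 1, cv, dv]

theorem mono_cons (k : ℕ) (x : Colour) (l : List CPart) :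
    mono ((k, x) :: l) = colourWeight x * mono l := by
  fin_cases x <;> simp [mono, colourWeight, nc] <;> ring

theorem wt_cons (p : CPart) (l : List CPart) : wt (p :: l) = p.1 + wt l := by
  simp [wt]

theorem E_eq_mul_genFun_followers {k : ℕ} (x : Colour) (hk : 1 ≤ k) :
    E k x = PowerSeries.C (colourWeight x) * qq ^ k * genFun (followers k x) := by
  have htop {l : List CPart} (h : top l = (k, x)) : l = (k, x) :: l.tail := by
    cases l with
    | nil => simp [top] at h; omega
    | cons p t => simp_all [top]
  refine PowerSeries.ext fun n => ?_
  rw [E_eq_genFun, mul_comm _ (qq ^ k), mul_assoc, qq, coeff_X_pow_mul',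
    PowerSeries.coeff_C_mul]
  simp only [genFun, coeff_mk, Set.mem_singleton_iff]
  split_ifs with hkn
  · have himage : {l | IsPrimc l ∧ wt l = n ∧ top l = (k, x)} =
        List.cons (k, x) '' {l | IsPrimc l ∧ wt l = n - k ∧ top l ∈ followers k x} := by
      ext l
      simp only [Set.mem_ofPred_eq, Set.mem_image]
      constructor
      · rintro ⟨hl, hw, ht⟩
        have hl' := htop ht
        rw [hl', isPrimc_cons_iff hk] at hl
        rw [hl', wt_cons] at hw
        exact ⟨l.tail, ⟨hl.1, by omega, hl.2⟩, hl'.symm⟩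
      · rintro ⟨t, ⟨ht, hw, hf⟩, rfl⟩
        exact ⟨(isPrimc_cons_iff hk).2 ⟨ht, hf⟩, by rw [wt_cons]; omega, rfl⟩
    rw [himage, finsum_mem_image List.cons_injective.injOn, mul_finsum_mem]
    simp only [mono_cons]
  · convert finsum_mem_empty (f := mono)
    refine Set.eq_empty_of_forall_notMem fun l ⟨_, hw, ht⟩ => ?_
    rw [htop ht, wt_cons] at hw
    omega

theorem followers_succ_one (j : ℕ) :
    followers (j + 1) 1 = {t | pos t ≤ pos (j, 3)} ∪ {(j + 1, 1)} := by
  ext ⟨m, z⟩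
  fin_cases z <;> simp [followers, pos, Dmat] <;> omega

theorem followers_add_two_zero (j : ℕ) :
    followers (j + 2) 0 = {t | pos t ≤ pos (j, 3)} ∪ {(j + 1, 1)} := by
  ext ⟨m, z⟩
  fin_cases z <;> simp [followers, pos, Dmat] <;> omega

theorem followers_succ_two (j : ℕ) :
    followers (j + 1) 2 = {t | pos t ≤ pos (j, 2)} ∪ {(j + 1, 0)} ∪ {(j + 1, 2)} := by
  ext ⟨m, z⟩
  fin_cases z <;> simp [followers, pos, Dmat] <;> omega

theorem followers_three (k : ℕ) : followers k 3 = followers k 2 := by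
  ext ⟨m, z⟩
  fin_cases z <;> simp [followers, pos, Dmat] <;> omega

theorem one_sub_mul_E_succ_one (j : ℕ) :
    (1 - qq ^ (j + 1)) * E (j + 1) 1 = qq ^ (j + 1) * G j 3 := by
  have h := E_eq_mul_genFun_followers 1 (Nat.le_add_left 1 j)
  rw [followers_succ_one, genFun_union (by simp [pos]; omega), ← G_eq_genFun,
    ← E_eq_genFun] at h
  simp only [colourWeight, Matrix.cons_val_one, Matrix.cons_val_zero, map_one, one_mul] at h
  linear_combination h

theorem one_sub_mul_E_add_two_zero (j : ℕ) :
    (1 - qq ^ (j + 1)) * E (j + 2) 0 = PowerSeries.C av * qq ^ (j + 2) * G j 3 := by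
  have h := E_eq_mul_genFun_followers 0 (Nat.le_add_left 1 (j + 1))
  rw [followers_add_two_zero, genFun_union (by simp [pos]; omega), ← G_eq_genFun,
    ← E_eq_genFun] at h
  simp only [colourWeight, Matrix.cons_val_zero] at h
  linear_combination
    (1 - qq ^ (j + 1)) * h + PowerSeries.C av * qq ^ (j + 2) * one_sub_mul_E_succ_one j

theorem G_succ_one (j : ℕ) : G (j + 1) 1 = G j 3 + E (j + 1) 0 + E (j + 1) 1 := by
  rw [G_eq_G_add_E (k' := j + 1) (x' := 0) (by simp [pos]),
    G_eq_G_add_E (k' := j) (x' := 3) (by simp [pos]; omega)]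

theorem E_succ_two (j : ℕ) :
    E (j + 1) 2 = PowerSeries.C cv * qq ^ (j + 1) * genFun (followers (j + 1) 2) :=
  E_eq_mul_genFun_followers 2 (Nat.le_add_left 1 j)

theorem E_succ_three (j : ℕ) :
    E (j + 1) 3 = PowerSeries.C dv * qq ^ (j + 1) * genFun (followers (j + 1) 2) := by
  rw [← followers_three]
  exact E_eq_mul_genFun_followers 3 (Nat.le_add_left 1 j)

theorem G_succ_three (j : ℕ) :
    G (j + 1) 3 = G (j + 1) 1 +
      (PowerSeries.C cv + PowerSeries.C dv) * qq ^ (j + 1) * genFun (followers (j + 1) 2) := by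
  rw [G_eq_G_add_E (k' := j + 1) (x' := 2) (by simp [pos]),
    G_eq_G_add_E (k' := j + 1) (x' := 1) (by simp [pos]), E_succ_two, E_succ_three]
  ring

theorem one_sub_mul_genFun_followers_succ_two (j : ℕ) :
    (1 - PowerSeries.C cv * qq ^ (j + 1)) * genFun (followers (j + 1) 2) =
      G j 2 + E (j + 1) 0 := by
  have h : genFun (followers (j + 1) 2) = G j 2 + E (j + 1) 0 + E (j + 1) 2 := by
    rw [followers_succ_two, genFun_union (by simp [pos]), genFun_union (by simp [pos]; omega),
      ← G_eq_genFun, ← E_eq_genFun, ← E_eq_genFun]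
  linear_combination h + E_succ_two j

theorem one_sub_mul_G_add_two_three (j : ℕ) :
    (1 - PowerSeries.C cv * qq ^ (j + 2)) * G (j + 2) 3 =
      G (j + 1) 3 + (1 + PowerSeries.C dv * qq ^ (j + 2)) * E (j + 2) 0 +
        (1 - PowerSeries.C cv * qq ^ (j + 2)) * E (j + 2) 1 +
        PowerSeries.C dv * qq ^ (j + 2) * G (j + 1) 1 := by
  have hG : G (j + 1) 3 = G (j + 1) 2 + E (j + 1) 3 := G_eq_G_add_E (by simp [pos])
  set Q := qq ^ (j + 2)
  set c := PowerSeries.C cv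
  set d := PowerSeries.C dv
  linear_combination (1 - c * Q) * G_succ_three (j + 1) + (1 - c * Q) * G_succ_one (j + 1) +
    (c + d) * Q * one_sub_mul_genFun_followers_succ_two (j + 1) - (c + d) * Q * hG -
    (c + d) * Q * E_succ_three j + d * Q * G_succ_three j

theorem isUnit_one_sub_qq_pow_succ (j : ℕ) : IsUnit (1 - qq ^ (j + 1)) := by
  simp [PowerSeries.isUnit_iff_constantCoeff, qq]

theorem E_succ_one_eq (j : ℕ) :
    E (j + 1) 1 = Ring.inverse (1 - qq ^ (j + 1)) * (qq ^ (j + 1) * G j 3) :=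
  ((Ring.inverse_mul_eq_iff_eq_mul _ _ _ (isUnit_one_sub_qq_pow_succ j)).2
    (one_sub_mul_E_succ_one j).symm).symm

theorem E_add_two_zero_eq (j : ℕ) :
    E (j + 2) 0 = Ring.inverse (1 - qq ^ (j + 1)) * (PowerSeries.C av * qq ^ (j + 2) * G j 3) :=
  ((Ring.inverse_mul_eq_iff_eq_mul _ _ _ (isUnit_one_sub_qq_pow_succ j)).2
    (one_sub_mul_E_add_two_zero j).symm).symm

/-- Proposition 2.2: for all `k ≥ 3`, in `R`,
`(1 − c q^k) G_{k_d} = (1 − c q^{2k})(1 − q^k)⁻¹ G_{(k−1)_d}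
  + (a q^k + d q^k + a d q^{2k})(1 − q^{k−1})⁻¹ G_{(k−2)_d}
  + a d q^{2k−1} (1 − q^{k−2})⁻¹ G_{(k−3)_d}`,
where the inverses (via `Ring.inverse`) exist since each `1 − q^j` (`j ≥ 1`) has constant
term `1` and hence is invertible in `R`. -/
theorem statement13 (k : ℕ) (hk : 3 ≤ k) :
    (1 - PowerSeries.C cv * qq ^ k) * G k 3 =
      (1 - PowerSeries.C cv * qq ^ (2 * k)) * Ring.inverse (1 - qq ^ k) * G (k - 1) 3 +
      (PowerSeries.C av * qq ^ k + PowerSeries.C dv * qq ^ k +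
          PowerSeries.C av * PowerSeries.C dv * qq ^ (2 * k)) *
        Ring.inverse (1 - qq ^ (k - 1)) * G (k - 2) 3 +
      PowerSeries.C av * PowerSeries.C dv * qq ^ (2 * k - 1) *
        Ring.inverse (1 - qq ^ (k - 2)) * G (k - 3) 3 := by
  obtain ⟨m, rfl⟩ : ∃ m, k = m + 3 := ⟨k - 3, by omega⟩
  rw [show m + 3 - 1 = m + 2 by omega, show m + 3 - 2 = m + 1 by omega, Nat.add_sub_cancel,
    show 2 * (m + 3) - 1 = (m + 3) + (m + 2) by omega,
    show 2 * (m + 3) = (m + 3) + (m + 3) by omega,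
    one_sub_mul_G_add_two_three (m + 1), G_succ_one (m + 1), E_succ_one_eq (m + 2),
    E_succ_one_eq (m + 1), E_add_two_zero_eq (m + 1), E_add_two_zero_eq m]
  have hu₃ := Ring.mul_inverse_cancel _ (isUnit_one_sub_qq_pow_succ (m + 2))
  have hu₂ := Ring.mul_inverse_cancel _ (isUnit_one_sub_qq_pow_succ (m + 1))
  linear_combination -G (m + 2) 3 * hu₃ - PowerSeries.C dv * qq ^ (m + 3) * G (m + 1) 3 * hu₂

end Primc
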